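/- arXiv:1512.00429 — 6 statements merged into one kernel-verified Lean document; each statement's English description precedes it below -/
import Mathlib

section
/- With the structures as in the standard setup and θₐ := φₐφ - ξₐ⊗η, one has θₐξₐ₊₁ = φξₐ₊₂ = -θₐ₊₁ξₐ (indices mod 3). -/
open RealInnerProductSpace

/-- Pointwise setup on a real inner product space: an almost contact metric
structure `(φ, ξ, η)` together with an almost contact metric 3-structure
`(φₐ, ξₐ, ηₐ)`, `a ∈ ZMod 3`, satisfying the quaternionic contact relations and
the compatibility relations coming from `JJₐ = JₐJ`.  Here `η x = ⟪x, ξ⟫` and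
`ηₐ x = ⟪x, ξₐ⟫`. -/
structure ContactSetup (V : Type*) [NormedAddCommGroup V] [InnerProductSpace ℝ V] where
  φ : V →ₗ[ℝ] V
  ξ : V
  φa : ZMod 3 → (V →ₗ[ℝ] V)
  ξa : ZMod 3 → V
  φ_sq : ∀ x, φ (φ x) = -x + ⟪x, ξ⟫ • ξ
  ξ_unit : ⟪ξ, ξ⟫ = 1
  φ_ξ : φ ξ = 0
  φ_metric : ∀ x y, ⟪φ x, φ y⟫ = ⟪x, y⟫ - ⟪x, ξ⟫ * ⟪y, ξ⟫
  φa_sq : ∀ a x, φa a (φa a x) = -x + ⟪x, ξa a⟫ • ξa a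
  ξa_unit : ∀ a, ⟪ξa a, ξa a⟫ = 1
  φa_ξa : ∀ a, φa a (ξa a) = 0
  φa_metric : ∀ a x y, ⟪φa a x, φa a y⟫ = ⟪x, y⟫ - ⟪x, ξa a⟫ * ⟪y, ξa a⟫
  quat₁ : ∀ a x, φa a (φa (a + 1) x) - ⟪x, ξa (a + 1)⟫ • ξa a = φa (a + 2) x
  quat₂ : ∀ a x, φa (a + 2) x = -(φa (a + 1) (φa a x)) + ⟪x, ξa a⟫ • ξa (a + 1)
  quat_ξ₁ : ∀ a, φa a (ξa (a + 1)) = ξa (a + 2)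
  quat_ξ₂ : ∀ a, ξa (a + 2) = -(φa (a + 1) (ξa a))
  inter : ∀ a x, φa a (φ x) - ⟪x, ξ⟫ • ξa a = φ (φa a x) - ⟪x, ξa a⟫ • ξ
  inter_ξ : ∀ a, φ (ξa a) = φa a ξ

/-- The local symmetric tensor `θₐ := φₐφ - ξₐ ⊗ η`. -/
def ContactSetup.θa {V : Type*} [NormedAddCommGroup V] [InnerProductSpace ℝ V]
    (S : ContactSetup V) (a : ZMod 3) (x : V) : V :=
  S.φa a (S.φ x) - ⟪x, S.ξ⟫ • S.ξa a

section Aux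

private lemma contact_arith (s0 s1 s2 : ℝ) (r0 : 2 * s0 = s1 * s2)
    (r1 : 2 * s1 = s2 * s0) (r2 : 2 * s2 = s0 * s1)
    (b0 : |s0| ≤ 1) (b1 : |s1| ≤ 1) (b2 : |s2| ≤ 1) : s0 = 0 := by
  rw [abs_le] at b0 b1 b2
  have h01 : (s0 - s1) * (2 + s2) = 0 := by linear_combination r0 - r1
  have e01 : s0 = s1 := by
    rcases mul_eq_zero.mp h01 with h | h
    · linarith
    · linarith
  have h12 : (s1 - s2) * (2 + s0) = 0 := by linear_combination r1 - r2
  have e12 : s1 = s2 := by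
    rcases mul_eq_zero.mp h12 with h | h
    · linarith
    · linarith
  rw [e01, e12] at r0
  have hq : s2 * (s2 - 2) = 0 := by linear_combination -r0
  rcases mul_eq_zero.mp hq with h | h
  · rw [e01, e12]; exact h
  · linarith

variable {V : Type*} [NormedAddCommGroup V] [InnerProductSpace ℝ V] (S : ContactSetup V)

lemma ContactSetup.xia_norm (a : ZMod 3) : ‖S.ξa a‖ = 1 := by
  have h := S.ξa_unit a
  rw [real_inner_self_eq_norm_sq] at h
  nlinarith [norm_nonneg (S.ξa a)]

lemma ContactSetup.xia_bound (a b : ZMod 3) : |⟪S.ξa a, S.ξa b⟫| ≤ 1 := by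
  have h := abs_real_inner_le_norm (S.ξa a) (S.ξa b)
  rwa [S.xia_norm, S.xia_norm, mul_one] at h

lemma ContactSetup.rel (a : ZMod 3) :
    2 * ⟪S.ξa a, S.ξa (a + 1)⟫ = ⟪S.ξa (a + 1), S.ξa (a + 2)⟫ * ⟪S.ξa (a + 2), S.ξa a⟫ := by
  have i1 : ∀ b : ZMod 3, b + 2 + 1 = b := by decide
  have i2 : ∀ b : ZMod 3, b + 2 + 2 = b + 1 := by decide
  have i3 : ∀ b : ZMod 3, b + 1 + 1 = b + 2 := by decide
  have i4 : ∀ b : ZMod 3, b + 1 + 2 = b := by decide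
  have e1 : S.φa (a + 2) (S.ξa a) = S.ξa (a + 1) := by
    have := S.quat_ξ₁ (a + 2); rwa [i1, i2] at this
  have e2 : S.φa (a + 2) (S.ξa (a + 1)) = -(S.ξa a) := by
    have := S.quat_ξ₂ (a + 1); rw [i4, i3] at this
    rw [this, neg_neg]
  have key := S.φa_metric (a + 2) (S.ξa (a + 1)) (S.ξa a)
  rw [e1, e2, inner_neg_left] at key
  have c1 : ⟪S.ξa (a+1), S.ξa a⟫ = ⟪S.ξa a, S.ξa (a+1)⟫ := real_inner_comm _ _
  have c2 : ⟪S.ξa a, S.ξa (a+2)⟫ = ⟪S.ξa (a+2), S.ξa a⟫ := real_inner_comm _ _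
  rw [c1, c2] at key
  linarith [key]

lemma ContactSetup.xia_orth (a : ZMod 3) : ⟪S.ξa a, S.ξa (a + 1)⟫ = 0 := by
  have i1 : ∀ b : ZMod 3, b + 2 + 1 = b := by decide
  have i2 : ∀ b : ZMod 3, b + 2 + 2 = b + 1 := by decide
  have i3 : ∀ b : ZMod 3, b + 1 + 1 = b + 2 := by decide
  have i4 : ∀ b : ZMod 3, b + 1 + 2 = b := by decide
  have r0 := S.rel a
  have r1 := S.rel (a + 1)
  rw [i3, i4] at r1
  have r2 := S.rel (a + 2)
  rw [i1, i2] at r2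
  exact contact_arith _ _ _ r0 r1 r2 (S.xia_bound _ _) (S.xia_bound _ _) (S.xia_bound _ _)

end Aux

/-- `θₐ ξₐ₊₁ = φ ξₐ₊₂ = -θₐ₊₁ ξₐ` (indices mod 3). -/
theorem theta_a_on_next_reeb {V : Type*} [NormedAddCommGroup V] [InnerProductSpace ℝ V]
    (S : ContactSetup V) (a : ZMod 3) :
    S.θa a (S.ξa (a + 1)) = S.φ (S.ξa (a + 2)) ∧
    S.φ (S.ξa (a + 2)) = -(S.θa (a + 1) (S.ξa a)) := by
  constructor
  · rw [ContactSetup.θa, S.inter a (S.ξa (a + 1)), S.quat_ξ₁ a,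
      real_inner_comm, S.xia_orth a, zero_smul, sub_zero]
  · have h : S.φa (a + 1) (S.ξa a) = -(S.ξa (a + 2)) := by
      rw [S.quat_ξ₂ a, neg_neg]
    rw [ContactSetup.θa, S.inter (a + 1) (S.ξa a), S.xia_orth a, zero_smul,
      sub_zero, h, map_neg, neg_neg]
end

section
/- With the structures as in the standard setup and θₐ := φₐφ - ξₐ⊗η, one has the identity θₐ² - (φξₐ)⊗(ηₐ∘φ) = I, where I is the identity endomorphism, i.e. θₐ²X - ηₐ(φX)·φξₐ = X for all X. -/
open RealInnerProductSpace

lemma ContactSetup.key {V : Type*} [NormedAddCommGroup V] [InnerProductSpace ℝ V]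
    (S : ContactSetup V) (a : ZMod 3) (w v : V) :
    ⟪S.φa a w, v⟫ = -⟪w, S.φa a v⟫ + ⟪w, S.ξa a⟫ * ⟪S.φa a v, S.ξa a⟫
      + ⟪S.φa a w, S.ξa a⟫ * ⟪v, S.ξa a⟫ := by
  have h := S.φa_metric a (S.φa a w) v
  rw [S.φa_sq a w, inner_add_left, inner_neg_left, real_inner_smul_left] at h
  rw [real_inner_comm (S.ξa a) (S.φa a v)]
  linarith

lemma ContactSetup.czero {V : Type*} [NormedAddCommGroup V] [InnerProductSpace ℝ V]
    (S : ContactSetup V) (a : ZMod 3) (u : V) : ⟪S.φa a u, S.ξa a⟫ = 0 := by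
  have h := S.key a u (S.φa a u)
  rw [S.φa_sq a u, inner_add_right, inner_neg_right, real_inner_smul_right,
    inner_add_left, inner_neg_left, real_inner_smul_left, S.ξa_unit a,
    S.φa_metric a u u] at h
  nlinarith [real_inner_comm u (S.ξa a), real_inner_comm (S.φa a u) (S.ξa a),
    real_inner_comm u (S.φa a u)]

/-- `θₐ² - (φξₐ) ⊗ (ηₐ ∘ φ) = I`: for all `X`,
`θₐ(θₐ X) - ηₐ(φ X) • φ ξₐ = X`. -/
theorem theta_a_sq {V : Type*} [NormedAddCommGroup V] [InnerProductSpace ℝ V]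
    (S : ContactSetup V) (a : ZMod 3) (x : V) :
    S.θa a (S.θa a x) - ⟪S.φ x, S.ξa a⟫ • S.φ (S.ξa a) = x := by
  have hw : S.φa a (S.φ (S.φa a (S.φ x)))
      = S.φ (S.φa a (S.φa a (S.φ x))) - ⟪S.φa a (S.φ x), S.ξa a⟫ • S.ξ
        + ⟪S.φa a (S.φ x), S.ξ⟫ • S.ξa a := by
    have := S.inter a (S.φa a (S.φ x)); linear_combination (norm := module) this
  simp only [ContactSetup.θa, map_sub, map_smul, inner_sub_left, real_inner_smul_left, hw,
    S.czero a, S.φa_sq, map_add, map_neg, S.φ_sq, S.inter_ξ a, real_inner_comm (S.ξa a) S.ξ]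
  module
end

section
/- With the structures as in the standard setup and θₐ := φₐφ - ξₐ⊗η, one has θₐφ - (φξₐ)⊗η = -φₐ = φθₐ - ξ⊗(ηₐ∘φ), i.e. for all X: θₐφX - η(X)φξₐ = -φₐX and φθₐX - ηₐ(φX)ξ = -φₐX. -/
open RealInnerProductSpace

/-- Expand `f³ y` once as `f (f² y)` and once as `f² (f y)`. -/
theorem inner_apply_eq_zero_of_sq_eq_neg_add {V : Type*} [NormedAddCommGroup V]
    [InnerProductSpace ℝ V] (f : V →ₗ[ℝ] V) (ξ : V) (hsq : ∀ x, f (f x) = -x + ⟪x, ξ⟫ • ξ)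
    (hξ : f ξ = 0) (hunit : ⟪ξ, ξ⟫ = 1) (y : V) : ⟪f y, ξ⟫ = 0 := by
  have hcube : f (f (f y)) = -f y := by
    rw [hsq y, map_add, map_neg, map_smul, hξ, smul_zero, add_zero]
  have hsmul : ⟪f y, ξ⟫ • ξ = 0 := by
    linear_combination (norm := module) (hsq (f y)).symm.trans hcube
  simpa only [real_inner_smul_left, hunit, mul_one, inner_zero_left] using congrArg (⟪·, ξ⟫) hsmul

namespace ContactSetup

variable {V : Type*} [NormedAddCommGroup V] [InnerProductSpace ℝ V] (S : ContactSetup V)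

theorem inner_φ_ξ (y : V) : ⟪S.φ y, S.ξ⟫ = 0 :=
  inner_apply_eq_zero_of_sq_eq_neg_add S.φ S.ξ S.φ_sq S.φ_ξ S.ξ_unit y

theorem θa_φ (a : ZMod 3) (x : V) :
    S.θa a (S.φ x) = -S.φa a x + ⟪x, S.ξ⟫ • S.φ (S.ξa a) := by
  rw [θa, inner_φ_ξ, S.φ_sq, map_add, map_neg, map_smul, S.inter_ξ, zero_smul, sub_zero]

theorem φ_θa (a : ZMod 3) (x : V) :
    S.φ (S.θa a x) =
      S.θa a (S.φ x) + ⟪S.φ x, S.ξa a⟫ • S.ξ - ⟪x, S.ξ⟫ • S.φ (S.ξa a) := by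
  have hcomm := S.inter a (S.φ x)
  rw [inner_φ_ξ, zero_smul, sub_zero] at hcomm
  rw [θa, θa, inner_φ_ξ, zero_smul, sub_zero, map_sub, map_smul, hcomm]
  abel

end ContactSetup

/-- `θₐφ - (φξₐ)⊗η = -φₐ = φθₐ - ξ⊗(ηₐ∘φ)`. -/
theorem theta_a_phi {V : Type*} [NormedAddCommGroup V] [InnerProductSpace ℝ V]
    (S : ContactSetup V) (a : ZMod 3) (x : V) :
    S.θa a (S.φ x) - ⟪x, S.ξ⟫ • S.φ (S.ξa a) = -(S.φa a x) ∧
    S.φ (S.θa a x) - ⟪S.φ x, S.ξa a⟫ • S.ξ = -(S.φa a x) := by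
  constructor
  · rw [S.θa_φ]
    abel
  · rw [S.φ_θa, S.θa_φ]
    abel
end

section
/- With the structures as in the standard setup and θₐ := φₐφ - ξₐ⊗η, one has θₐφₐ - (φξₐ)⊗ηₐ = -φ, i.e. θₐφₐX - ηₐ(X)φξₐ = -φX for all X. -/
open RealInnerProductSpace

/-- `θₐφₐ - (φξₐ)⊗ηₐ = -φ`: for all `X`, `θₐ(φₐ X) - ηₐ(X) • φ ξₐ = -φ X`. -/
theorem theta_a_phi_a {V : Type*} [NormedAddCommGroup V] [InnerProductSpace ℝ V]
    (S : ContactSetup V) (a : ZMod 3) (x : V) :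
    S.θa a (S.φa a x) - ⟪x, S.ξa a⟫ • S.φ (S.ξa a) = -(S.φ x) := by
  have hη : ∀ y : V, ⟪S.φa a y, S.ξa a⟫ = 0 := by
    intro y
    have h1 := S.φa_metric a (S.φa a y) (S.φa a y)
    have h2 := S.φa_metric a y y
    have hsq := S.φa_sq a y
    rw [hsq] at h1
    have hexp : ⟪-y + ⟪y, S.ξa a⟫ • S.ξa a, -y + ⟪y, S.ξa a⟫ • S.ξa a⟫
        = ⟪y, y⟫ - ⟪y, S.ξa a⟫ * ⟪y, S.ξa a⟫ := by
      simp only [inner_add_add_self, real_inner_smul_left, real_inner_smul_right,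
        S.ξa_unit a, inner_neg_neg, inner_neg_left, inner_neg_right, real_inner_comm y]
      ring
    rw [hexp, h2] at h1
    have : ⟪S.φa a y, S.ξa a⟫ * ⟪S.φa a y, S.ξa a⟫ = 0 := by linarith
    exact pow_eq_zero_iff (n := 2) (by norm_num) |>.mp (by rw [sq]; exact this)
  have hinter := S.inter a (S.φa a x)
  have key : S.φa a (S.φ (S.φa a x)) = S.φ (S.φa a (S.φa a x)) + ⟪S.φa a x, S.ξ⟫ • S.ξa a := by
    rw [hη x, zero_smul, sub_zero] at hinter
    rw [← hinter]
    abel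
  show S.φa a (S.φ (S.φa a x)) - ⟪S.φa a x, S.ξ⟫ • S.ξa a - ⟪x, S.ξa a⟫ • S.φ (S.ξa a) = -(S.φ x)
  rw [key, S.φa_sq a x, map_add, map_neg, map_smul]
  abel
end

section
/- With φ⊥ := Σₐ ηₐ(ξ)φₐ, ξ⊥ := Σₐ ηₐ(ξ)ξₐ, η⊥ := Σₐ ηₐ(ξ)ηₐ, one has (φ⊥)² = -‖ξ⊥‖² I + ξ⊥⊗η⊥, i.e. φ⊥(φ⊥X) = -‖ξ⊥‖²X + η⊥(X)ξ⊥ for all X. -/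
open RealInnerProductSpace

namespace ContactSetup

variable {V : Type*} [NormedAddCommGroup V] [InnerProductSpace ℝ V] (S : ContactSetup V)

/-- `ξ⊥ := Σₐ ηₐ(ξ) ξₐ`. -/
def ξperp : V := ∑ a : ZMod 3, ⟪S.ξ, S.ξa a⟫ • S.ξa a

/-- `η⊥ := Σₐ ηₐ(ξ) ηₐ`. -/
def ηperp (x : V) : ℝ := ∑ a : ZMod 3, ⟪S.ξ, S.ξa a⟫ * ⟪x, S.ξa a⟫

/-- `θ := Σₐ ηₐ(ξ) θₐ`. -/
def θ (x : V) : V := ∑ a : ZMod 3, ⟪S.ξ, S.ξa a⟫ • S.θa a x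

/-- `φ⊥ := Σₐ ηₐ(ξ) φₐ`. -/
def φperp (x : V) : V := ∑ a : ZMod 3, ⟪S.ξ, S.ξa a⟫ • S.φa a x

/-- `‖ξ⊥‖² = Σₐ ηₐ(ξ)²`. -/
def nsq : ℝ := ∑ a : ZMod 3, ⟪S.ξ, S.ξa a⟫ ^ 2

end ContactSetup

/-!
The `φₐ` satisfy Clifford-type relations
`φₐφ_b + φ_bφₐ = -2δₐ_b + ξₐ ⊗ η_b + ξ_b ⊗ ηₐ`: for `a ≠ b` the terms `±φ_c` of the
quaternionic relations cancel. For any coefficients `cₐ`, the square of `Σ cₐ φₐ` only sees the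
symmetric part of `Σ cₐ c_b φₐφ_b`, i.e. these anticommutators, and so equals
`-(Σ cₐ²) + (Σ cₐ ξₐ) ⊗ (Σ cₐ ηₐ)`; take `cₐ = ηₐ(ξ)`.
-/

theorem two_smul_sum_smul_apply_sum_smul {ι R M : Type*} [Fintype ι] [CommSemiring R]
    [AddCommMonoid M] [Module R M] (f : ι → M →ₗ[R] M) (c : ι → R) (x : M) :
    (2 : R) • ∑ a, c a • f a (∑ b, c b • f b x) =
      ∑ a, ∑ b, (c a * c b) • (f a (f b x) + f b (f a x)) := by
  rw [two_smul]
  simp only [map_sum, map_smul, smul_add, Finset.sum_add_distrib, Finset.smul_sum, smul_smul]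
  rw [Finset.sum_comm (f := fun a b => (c a * c b) • f b (f a x))]
  simp only [mul_comm (c _) (c _)]

theorem sum_smul_apply_sum_smul_of_anticomm {ι R M : Type*} [Fintype ι] [DecidableEq ι]
    [Field R] [NeZero (2 : R)] [AddCommGroup M] [Module R M] (f : ι → M →ₗ[R] M) (c : ι → R)
    (η : ι → M → R) (e : ι → M)
    (hf : ∀ a b x, f a (f b x) + f b (f a x) =
      η b x • e a + η a x • e b - (if a = b then (2 : R) else 0) • x) (x : M) :
    ∑ a, c a • f a (∑ b, c b • f b x) =
      -((∑ a, c a ^ 2) • x) + (∑ a, c a * η a x) • ∑ a, c a • e a := by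
  apply smul_right_injective M (two_ne_zero' R)
  have hcross : ∑ a, ∑ b, (c a * c b) • (η b x • e a) = (∑ b, c b * η b x) • ∑ a, c a • e a := by
    rw [Finset.sum_smul_sum, Finset.sum_comm]
    simp only [smul_smul, mul_comm, mul_left_comm]
  have hdiag : ∑ a, ∑ b, (c a * c b) • (if a = b then (2 : R) else 0) • x =
      (2 : R) • (∑ a, c a ^ 2) • x := by
    simp [Finset.sum_smul, Finset.smul_sum, smul_smul, sq, mul_comm]
  simp only [two_smul_sum_smul_apply_sum_smul, hf, smul_sub, smul_add, Finset.sum_sub_distrib,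
    Finset.sum_add_distrib, hdiag]
  rw [Finset.sum_comm (f := fun a b => (c a * c b) • η a x • e b)]
  simp only [mul_comm (c _) (c _), hcross]
  module

namespace ContactSetup

variable {V : Type*} [NormedAddCommGroup V] [InnerProductSpace ℝ V] (S : ContactSetup V)

lemma φa_anticomm_add_one (a : ZMod 3) (x : V) :
    S.φa a (S.φa (a + 1) x) + S.φa (a + 1) (S.φa a x) =
      ⟪x, S.ξa (a + 1)⟫ • S.ξa a + ⟪x, S.ξa a⟫ • S.ξa (a + 1) := by
  linear_combination (norm := module) S.quat₁ a x + S.quat₂ a x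

lemma φa_anticomm (a b : ZMod 3) (x : V) :
    S.φa a (S.φa b x) + S.φa b (S.φa a x) =
      ⟪x, S.ξa b⟫ • S.ξa a + ⟪x, S.ξa a⟫ • S.ξa b - (if a = b then (2 : ℝ) else 0) • x := by
  by_cases hab : a = b
  · subst hab
    rw [if_pos rfl, S.φa_sq]
    module
  · rw [if_neg hab, zero_smul, sub_zero]
    have hadj : b = a + 1 ∨ a = b + 1 := by revert a b; decide
    rcases hadj with rfl | rfl
    · exact S.φa_anticomm_add_one a x
    · rw [add_comm, add_comm (_ • _)]
      exact S.φa_anticomm_add_one b x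

end ContactSetup

theorem phi_perp_sq_general {V : Type*} [NormedAddCommGroup V] [InnerProductSpace ℝ V]
    (S : ContactSetup V) (x : V) :
    S.φperp (S.φperp x) = -(S.nsq • x) + S.ηperp x • S.ξperp :=
  sum_smul_apply_sum_smul_of_anticomm S.φa (fun a => ⟪S.ξ, S.ξa a⟫) (fun a x => ⟪x, S.ξa a⟫)
    S.ξa S.φa_anticomm x

/-- `(φ⊥)² = -‖ξ⊥‖² I + ξ⊥ ⊗ η⊥`: for all `X`,
`φ⊥(φ⊥ X) = -‖ξ⊥‖² • X + η⊥(X) • ξ⊥`. -/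
theorem phi_perp_sq {V : Type*} [NormedAddCommGroup V] [InnerProductSpace ℝ V]
    (S : ContactSetup V)
    (horth : ∀ a b : ZMod 3, a ≠ b → ⟪S.ξa a, S.ξa b⟫ = 0) (x : V) :
    S.φperp (S.φperp x) = -(S.nsq • x) + S.ηperp x • S.ξperp :=
  phi_perp_sq_general S x
end

section
/- With θ := Σₐ ηₐ(ξ)θₐ, φ⊥ := Σₐ ηₐ(ξ)φₐ, ξ⊥ := Σₐ ηₐ(ξ)ξₐ, η⊥ := Σₐ ηₐ(ξ)ηₐ, one has φ⊥φ - ξ⊥⊗η = θ = φφ⊥ - ξ⊗η⊥, i.e. for all X: φ⊥(φX) - η(X)ξ⊥ = θX and φ(φ⊥X) - η⊥(X)ξ = θX. -/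
open RealInnerProductSpace

/-- `φ⊥φ - ξ⊥⊗η = θ = φφ⊥ - ξ⊗η⊥`. -/
theorem phi_perp_phi {V : Type*} [NormedAddCommGroup V] [InnerProductSpace ℝ V]
    (S : ContactSetup V)
    (horth : ∀ a b : ZMod 3, a ≠ b → ⟪S.ξa a, S.ξa b⟫ = 0) (x : V) :
    S.φperp (S.φ x) - ⟪x, S.ξ⟫ • S.ξperp = S.θ x ∧
    S.φ (S.φperp x) - S.ηperp x • S.ξ = S.θ x := by
  constructor
  · simp only [ContactSetup.φperp, ContactSetup.ξperp, ContactSetup.θ, ContactSetup.θa,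
      Finset.smul_sum, smul_smul, ← Finset.sum_sub_distrib, smul_sub]
    refine Finset.sum_congr rfl fun a _ => ?_
    rw [mul_comm]
  · simp only [ContactSetup.φperp, ContactSetup.ηperp, ContactSetup.θ, ContactSetup.θa,
      map_sum, map_smul, Finset.sum_smul, ← Finset.sum_sub_distrib, smul_smul]
    refine Finset.sum_congr rfl fun a _ => ?_
    rw [S.inter a x, smul_sub, mul_smul]
end
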